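/- Let m, n ≥ 2 be integers. In ℤ^{m+n} = ℤ^m × ℤ^n with standard basis vectors e_1,…,e_m of the first factor and f_1,…,f_n of the second factor, let u = Σ_{i=1}^m e_i − Σ_{j=1}^n f_j. Let ∅ ≠ C₁ ⊊ {1,…,m} and ∅ ≠ C₂ ⊊ {1,…,n}, set c = Σ_{i∉C₁} e_i − Σ_{j∈C₂} f_j, and fix i₀ ∈ {1,…,m} ∖ C₁ and j₀ ∈ {1,…,n} ∖ C₂. Then the images of the m+n−1 vectors c, e_i (i ∈ {1,…,m}, i ≠ i₀), and f_j (j ∈ {1,…,n}, j ≠ j₀) in the quotient ℤ-module ℤ^{m+n}/ℤu form a ℤ-basis of ℤ^{m+n}/ℤu. (This is the key lattice computation proving that the toric variety of a connected bipartite graph is smooth in codimension 2: the extremal ray c of the edge cone associated to a two-sided first independent set, together with the indicated standard basis vectors, extends to a ℤ-basis of the lattice N = ℤ^{m+n}/ℤu.) -/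

import Mathlib

/-!
Common setup: a bipartite graph `G ⊆ K_{m,n}` is encoded by an edge relation
`E : Fin m → Fin n → Prop` (vertex set `V = Fin m ⊕ Fin n`, with `U₁` the left
summand and `U₂` the right summand).
-/

namespace ToricBipartite

open Sum Finset

variable {m n : ℕ}

/-- The simple graph on `Fin m ⊕ Fin n` determined by the bipartite edge relation `E`. -/
def toGraph (E : Fin m → Fin n → Prop) : SimpleGraph (Fin m ⊕ Fin n) where
  Adj u v :=
    (∃ i j, u = inl i ∧ v = inr j ∧ E i j) ∨ (∃ i j, u = inr j ∧ v = inl i ∧ E i j)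
  symm := by
    constructor
    rintro u v (⟨i, j, hu, hv, h⟩ | ⟨i, j, hu, hv, h⟩)
    · exact Or.inr ⟨i, j, hv, hu, h⟩
    · exact Or.inl ⟨i, j, hv, hu, h⟩
  loopless := by
    constructor
    rintro u (⟨i, j, hu, hv, h⟩ | ⟨i, j, hu, hv, h⟩) <;> rw [hu] at hv <;> simp at hv

/-- The generator `e^i + f^j` of the dual edge cone. -/
def gen (i : Fin m) (j : Fin n) : (Fin m ⊕ Fin n) → ℝ :=
  Pi.single (inl i) 1 + Pi.single (inr j) 1

/-- The set of generators `{e^i + f^j : (i, m+j) ∈ E(G)}` of the dual edge cone. -/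
def genSet (E : Fin m → Fin n → Prop) : Set ((Fin m ⊕ Fin n) → ℝ) :=
  {x | ∃ i j, E i j ∧ x = gen i j}

/-- The dual edge cone `σ_G^∨ ⊆ ℝ^{m+n}`: all nonnegative combinations of the
generators `e^i + f^j` over the edges of `G`. -/
def dualEdgeCone (E : Fin m → Fin n → Prop) : Set ((Fin m ⊕ Fin n) → ℝ) :=
  {x | ∃ c : Fin m → Fin n → ℝ, (∀ i j, 0 ≤ c i j) ∧ (∀ i j, c i j ≠ 0 → E i j) ∧
      x = ∑ i, ∑ j, c i j • gen i j}

/-- The neighbour set `N(A) ⊆ U₂` of a set `A ⊆ U₁`. -/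
def nbrR (E : Fin m → Fin n → Prop) [∀ i j, Decidable (E i j)]
    (A : Finset (Fin m)) : Finset (Fin n) :=
  univ.filter fun j => ∃ i ∈ A, E i j

/-- The neighbour set `N(B) ⊆ U₁` of a set `B ⊆ U₂`. -/
def nbrL (E : Fin m → Fin n → Prop) [∀ i j, Decidable (E i j)]
    (B : Finset (Fin n)) : Finset (Fin m) :=
  univ.filter fun i => ∃ j ∈ B, E i j

/-- `A₁ ⊔ A₂ ⊆ U₁ ⊔ U₂` contains no pair of adjacent vertices (since the graph is
bipartite this says there is no edge between `A₁` and `A₂`). -/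
def IsIndepPair (E : Fin m → Fin n → Prop)
    (A₁ : Finset (Fin m)) (A₂ : Finset (Fin n)) : Prop :=
  ∀ i ∈ A₁, ∀ j ∈ A₂, ¬ E i j

/-- A two-sided independent set `B₁ ⊔ B₂`, with `∅ ≠ B₁ ⊊ U₁` and `∅ ≠ B₂ ⊊ U₂`. -/
def TwoSidedIndep (E : Fin m → Fin n → Prop)
    (B₁ : Finset (Fin m)) (B₂ : Finset (Fin n)) : Prop :=
  B₁.Nonempty ∧ B₁ ≠ univ ∧ B₂.Nonempty ∧ B₂ ≠ univ ∧ IsIndepPair E B₁ B₂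

/-- A two-sided *maximal* independent set: two-sided independent, and contained in no
strictly larger independent set of the graph. -/
def TwoSidedMaxIndep (E : Fin m → Fin n → Prop)
    (A₁ : Finset (Fin m)) (A₂ : Finset (Fin n)) : Prop :=
  TwoSidedIndep E A₁ A₂ ∧
    ∀ B₁ B₂, IsIndepPair E B₁ B₂ → A₁ ⊆ B₁ → A₂ ⊆ B₂ → B₁ = A₁ ∧ B₂ = A₂

/-- Membership in `I_G^(*)`: either a two-sided maximal independent set, or a one-sided
independent set of the form `U_i ∖ {v}` not contained in any two-sided independent set.
A set is encoded as the pair of its parts `(A₁, A₂) = (A ∩ U₁, A ∩ U₂)`. -/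
def InIStar (E : Fin m → Fin n → Prop)
    (A₁ : Finset (Fin m)) (A₂ : Finset (Fin n)) : Prop :=
  TwoSidedMaxIndep E A₁ A₂ ∨
    (A₂ = ∅ ∧ A₁.Nonempty ∧ (∃ v, A₁ = {v}ᶜ) ∧
      ¬ ∃ B₁ B₂, TwoSidedIndep E B₁ B₂ ∧ A₁ ⊆ B₁) ∨
    (A₁ = ∅ ∧ A₂.Nonempty ∧ (∃ v, A₂ = {v}ᶜ) ∧
      ¬ ∃ B₁ B₂, TwoSidedIndep E B₁ B₂ ∧ A₂ ⊆ B₂)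

/-- The edge relation of the associated (spanning) subgraph `G{A}` of `A ∈ I_G^(*)`:
for one-sided `A = A₁ ⊆ U₁` the edges of `G[A₁ ⊔ N(A₁)] ⊔ G[(U₁∖A₁) ⊔ (U₂∖N(A₁))]`,
symmetrically for one-sided `A = A₂ ⊆ U₂`, and for two-sided `A = A₁ ⊔ A₂` the edges of
`G[A₁ ⊔ N(A₁)] ⊔ G[A₂ ⊔ N(A₂)]`. -/
def assoc (E : Fin m → Fin n → Prop) [∀ i j, Decidable (E i j)]
    (A₁ : Finset (Fin m)) (A₂ : Finset (Fin n)) : Fin m → Fin n → Prop := fun i j =>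
  E i j ∧
    (if A₂ = ∅ then i ∈ A₁ ∨ j ∉ nbrR E A₁
     else if A₁ = ∅ then j ∈ A₂ ∨ i ∉ nbrL E A₂
     else i ∈ A₁ ∨ j ∈ A₂)

instance (E : Fin m → Fin n → Prop) [∀ i j, Decidable (E i j)]
    (A₁ : Finset (Fin m)) (A₂ : Finset (Fin n)) (i : Fin m) (j : Fin n) :
    Decidable (assoc E A₁ A₂ i j) := by
  unfold assoc; infer_instance

/-- The number of connected components of the bipartite graph with edge relation `E`
(isolated vertices count as connected components). -/
noncomputable def numComponents (E : Fin m → Fin n → Prop) : ℕ :=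
  Nat.card (toGraph E).ConnectedComponent

/-- `A ∈ I_G^(1)`: a first independent set, i.e. an element of `I_G^(*)` whose associated
subgraph `G{A}` has exactly two connected components. -/
def FirstIndep (E : Fin m → Fin n → Prop) [∀ i j, Decidable (E i j)]
    (A₁ : Finset (Fin m)) (A₂ : Finset (Fin n)) : Prop :=
  InIStar E A₁ A₂ ∧ numComponents (assoc E A₁ A₂) = 2

/-- The supporting hyperplane `H_{A₁}` of a one-sided set `A₁ ⊆ U₁`:
`Σ_{v ∈ A₁} x_v = Σ_{v ∈ N(A₁)} x_v`. -/
def hyp1 (E : Fin m → Fin n → Prop) [∀ i j, Decidable (E i j)]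
    (A₁ : Finset (Fin m)) : Set ((Fin m ⊕ Fin n) → ℝ) :=
  {x | ∑ i ∈ A₁, x (inl i) = ∑ j ∈ nbrR E A₁, x (inr j)}

/-- The supporting hyperplane `H_{A₂}` of a one-sided set `A₂ ⊆ U₂`. -/
def hyp2 (E : Fin m → Fin n → Prop) [∀ i j, Decidable (E i j)]
    (A₂ : Finset (Fin n)) : Set ((Fin m ⊕ Fin n) → ℝ) :=
  {x | ∑ j ∈ A₂, x (inr j) = ∑ i ∈ nbrL E A₂, x (inl i)}

/-- The supporting hyperplane `H_A` of `A = A₁ ⊔ A₂`, taken with respect to a nonempty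
one-sided part of `A`. -/
def hypA (E : Fin m → Fin n → Prop) [∀ i j, Decidable (E i j)]
    (A₁ : Finset (Fin m)) (A₂ : Finset (Fin n)) : Set ((Fin m ⊕ Fin n) → ℝ) :=
  if A₁ = ∅ then hyp2 E A₂ else hyp1 E A₁

/-- Connectivity of the induced subgraph `G[S ⊔ T]` for `S ⊆ U₁`, `T ⊆ U₂`. -/
def InducedConnected (E : Fin m → Fin n → Prop)
    (S : Finset (Fin m)) (T : Finset (Fin n)) : Prop :=
  ((toGraph E).induce
    ((inl '' (S : Set (Fin m)) ∪ inr '' (T : Set (Fin n))) : Set (Fin m ⊕ Fin n))).Connected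

/-- The degree (valency) sequence of the bipartite graph with edge relation `E`,
as a vector in `ℝ^{m+n}`. -/
def valVec (E : Fin m → Fin n → Prop) [∀ i j, Decidable (E i j)] :
    (Fin m ⊕ Fin n) → ℝ :=
  Sum.elim (fun i => ((univ.filter fun j => E i j).card : ℝ))
    (fun j => ((univ.filter fun i => E i j).card : ℝ))

/-!
Modulo the span of the `e_i` (`i ≠ i₀`) and `f_j` (`j ≠ j₀`), which consists of all vectors
vanishing at `i₀` and `j₀`, the vectors `c` and `u` reduce to `e_{i₀}` and `e_{i₀} - f_{j₀}`.
Hence `u`, `c` and those `m + n - 2` standard vectors span `ℤ^{m+n}`; being `m + n` many, they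
form a basis, and the members of a basis through `u` other than `u` form a basis of `ℤ^{m+n}/ℤu`.
-/

section QuotientBasis

open Module Submodule

variable {R M ι : Type*} [Ring R] [AddCommGroup M] [Module R M]

theorem linearIndependent_mkQ_comp_of_sumElim {u : M} {v : ι → M}
    (h : LinearIndependent R (Sum.elim (fun _ : Unit ↦ u) v)) :
    LinearIndependent R ((span R {u}).mkQ ∘ v) := by
  obtain ⟨-, hv, hdisj⟩ := linearIndependent_sum.mp h
  refine hv.map ?_
  rw [ker_mkQ]
  simpa only [Sum.elim_comp_inl, Set.range_const] using hdisj.symm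

theorem span_range_mkQ_comp_eq_top {u : M} {v : ι → M}
    (h : span R (insert u (Set.range v)) = ⊤) :
    span R (Set.range ((span R {u}).mkQ ∘ v)) = ⊤ := by
  rwa [Set.range_comp, span_image, map_mkQ_eq_top, ← span_insert]

-- A spanning family of `finrank R M` vectors is linearly independent by the Orzech property.
theorem linearIndependent_mkQ_comp_and_span_eq_top [OrzechProperty R] [Fintype ι]
    {u : M} {v : ι → M} (hspan : span R (insert u (Set.range v)) = ⊤)
    (hcard : Fintype.card ι + 1 = finrank R M) :
    LinearIndependent R ((span R {u}).mkQ ∘ v) ∧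
      span R (Set.range ((span R {u}).mkQ ∘ v)) = ⊤ := by
  refine ⟨linearIndependent_mkQ_comp_of_sumElim ?_, span_range_mkQ_comp_eq_top hspan⟩
  refine linearIndependent_of_top_le_span_of_card_eq_finrank ?_ ?_
  · rw [Set.Sum.elim_range, Set.range_const, ← Set.insert_eq, hspan]
  · rw [Fintype.card_sum, Fintype.card_unit, add_comm, hcard]

end QuotientBasis

section RayFamily

open Submodule

variable {R : Type*}

def rayFamily [Semiring R] (c : Fin m ⊕ Fin n → R) (i₀ : Fin m) (j₀ : Fin n) :
    Unit ⊕ {i : Fin m // i ≠ i₀} ⊕ {j : Fin n // j ≠ j₀} → Fin m ⊕ Fin n → R :=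
  Sum.elim (fun _ ↦ c) (Sum.elim (fun i ↦ Pi.single (inl i.1) 1) fun j ↦ Pi.single (inr j.1) 1)

theorem mem_span_rayFamily_of_apply_eq_zero [Semiring R] (c : Fin m ⊕ Fin n → R)
    {i₀ : Fin m} {j₀ : Fin n} {x : Fin m ⊕ Fin n → R}
    (hi₀ : x (inl i₀) = 0) (hj₀ : x (inr j₀) = 0) :
    x ∈ span R (Set.range (rayFamily c i₀ j₀)) := by
  have hx : x ∈ span R (Pi.basisFun R _ '' {inl i₀, inr j₀}ᶜ) := by
    rw [Module.Basis.mem_span_image]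
    intro p hp
    simp only [SetLike.mem_coe, Finsupp.mem_support_iff, Pi.basisFun_repr, ne_eq] at hp
    rintro (rfl | rfl) <;> contradiction
  refine span_mono ?_ hx
  rintro _ ⟨i | j, hp, rfl⟩
  · exact ⟨inr (inl ⟨i, fun h ↦ hp (.inl (h ▸ rfl))⟩), by simp [rayFamily]⟩
  · exact ⟨inr (inr ⟨j, fun h ↦ hp (.inr (h ▸ rfl))⟩), by simp [rayFamily]⟩

theorem span_insert_rayFamily_eq_top [Ring R] {c u : Fin m ⊕ Fin n → R}
    {i₀ : Fin m} {j₀ : Fin n}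
    (hci₀ : c (inl i₀) = 1) (hcj₀ : c (inr j₀) = 0) (hui₀ : u (inl i₀) = 1)
    (huj₀ : u (inr j₀) = -1) :
    span R (insert u (Set.range (rayFamily c i₀ j₀))) = ⊤ := by
  set S := span R (insert u (Set.range (rayFamily c i₀ j₀)))
  have hS : ∀ x : Fin m ⊕ Fin n → R, x (inl i₀) = 0 → x (inr j₀) = 0 → x ∈ S := fun x hi hj ↦
    span_mono (Set.subset_insert _ _) (mem_span_rayFamily_of_apply_eq_zero c hi hj)
  have hu : u ∈ S := subset_span (Set.mem_insert _ _)
  have hc : c ∈ S := subset_span (Set.mem_insert_of_mem _ ⟨inl (), rfl⟩)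
  have he : Pi.single (inl i₀) 1 ∈ S := by
    have := sub_mem hc (hS (c - Pi.single (inl i₀) 1) (by simp [hci₀]) (by simp [hcj₀]))
    rwa [sub_sub_cancel] at this
  have hf : Pi.single (inr j₀) 1 ∈ S := by
    have := sub_mem (sub_mem he hu)
      (hS (Pi.single (inl i₀) 1 - u - Pi.single (inr j₀) 1) (by simp [hui₀]) (by simp [huj₀]))
    rwa [sub_sub_cancel] at this
  refine eq_top_iff.mpr fun x _ ↦ ?_
  have := hS (x - x (inl i₀) • Pi.single (inl i₀) 1 - x (inr j₀) • Pi.single (inr j₀) 1)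
    (by simp) (by simp)
  simpa only [sub_add_cancel] using
    add_mem (add_mem this (smul_mem _ (x (inr j₀)) hf)) (smul_mem _ (x (inl i₀)) he)

end RayFamily

theorem extremal_ray_extends_to_basis_general (m n : ℕ)
    (C₁ : Finset (Fin m)) (C₂ : Finset (Fin n))
    (i₀ : Fin m) (hi₀ : i₀ ∉ C₁) (j₀ : Fin n) (hj₀ : j₀ ∉ C₂)
    (u c : (Fin m ⊕ Fin n) → ℤ)
    (hu : u = Sum.elim (fun _ => 1) (fun _ => -1))
    (hc : c = Sum.elim (fun i => if i ∈ C₁ then 0 else 1)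
      (fun j => if j ∈ C₂ then -1 else 0))
    (fam : Unit ⊕ {i : Fin m // i ≠ i₀} ⊕ {j : Fin n // j ≠ j₀} →
      ((Fin m ⊕ Fin n) → ℤ) ⧸ Submodule.span ℤ {u})
    (hfam : fam = Sum.elim (fun _ => (Submodule.span ℤ {u}).mkQ c)
      (Sum.elim (fun i => (Submodule.span ℤ {u}).mkQ (Pi.single (inl i.1) 1))
        (fun j => (Submodule.span ℤ {u}).mkQ (Pi.single (inr j.1) 1)))) :
    LinearIndependent ℤ fam ∧ Submodule.span ℤ (Set.range fam) = ⊤ := by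
  have hfam' : fam = (Submodule.span ℤ {u}).mkQ ∘ rayFamily c i₀ j₀ := by
    rw [hfam, rayFamily, Sum.comp_elim, Sum.comp_elim]
    rfl
  rw [hfam']
  refine linearIndependent_mkQ_comp_and_span_eq_top
    (span_insert_rayFamily_eq_top (by simp [hc, hi₀]) (by simp [hc, hj₀]) (by simp [hu])
      (by simp [hu])) ?_
  have := i₀.pos
  have := j₀.pos
  simp only [ne_eq, Fintype.card_sum, Fintype.card_unique, Fintype.card_subtype_compl,
    Fintype.card_fin, Module.finrank_fintype_fun_eq_card]
  omega

/-- Let `m, n ≥ 2`, `u = Σ e_i − Σ f_j ∈ ℤ^{m+n}`, let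
`∅ ≠ C₁ ⊊ {1,…,m}`, `∅ ≠ C₂ ⊊ {1,…,n}`, `c = Σ_{i ∉ C₁} e_i − Σ_{j ∈ C₂} f_j`, and fix
`i₀ ∉ C₁`, `j₀ ∉ C₂`. Then the images of the `m+n−1` vectors `c`, `e_i (i ≠ i₀)`,
`f_j (j ≠ j₀)` in `ℤ^{m+n}/ℤu` form a `ℤ`-basis (linearly independent and spanning). -/
theorem extremal_ray_extends_to_basis (m n : ℕ) (hm : 2 ≤ m) (hn : 2 ≤ n)
    (C₁ : Finset (Fin m)) (C₂ : Finset (Fin n))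
    (hC₁ : C₁.Nonempty) (hC₁u : C₁ ≠ Finset.univ)
    (hC₂ : C₂.Nonempty) (hC₂u : C₂ ≠ Finset.univ)
    (i₀ : Fin m) (hi₀ : i₀ ∉ C₁) (j₀ : Fin n) (hj₀ : j₀ ∉ C₂)
    (u c : (Fin m ⊕ Fin n) → ℤ)
    (hu : u = Sum.elim (fun _ => 1) (fun _ => -1))
    (hc : c = Sum.elim (fun i => if i ∈ C₁ then 0 else 1)
      (fun j => if j ∈ C₂ then -1 else 0))
    (fam : Unit ⊕ {i : Fin m // i ≠ i₀} ⊕ {j : Fin n // j ≠ j₀} →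
      ((Fin m ⊕ Fin n) → ℤ) ⧸ Submodule.span ℤ {u})
    (hfam : fam = Sum.elim (fun _ => (Submodule.span ℤ {u}).mkQ c)
      (Sum.elim (fun i => (Submodule.span ℤ {u}).mkQ (Pi.single (inl i.1) 1))
        (fun j => (Submodule.span ℤ {u}).mkQ (Pi.single (inr j.1) 1)))) :
    LinearIndependent ℤ fam ∧ Submodule.span ℤ (Set.range fam) = ⊤ :=
  extremal_ray_extends_to_basis_general m n C₁ C₂ i₀ hi₀ j₀ hj₀ u c hu hc fam hfam

end ToricBipartite
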